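/- arXiv:2605.25919 — 2 statements merged into one kernel-verified Lean document; each statement's English description precedes it below -/
import Mathlib

section
/- Let $K:\mathbb{R}^n\times\mathbb{R}^n\to\mathbb{C}$ satisfy $|K(x,y)-K(x',y)|\le \omega(|x-x'|/|x-y|)\,|x-y|^{-n}$ whenever $|x-x'|\le|x-y|/2$, where $\omega:[0,1]\to[0,\infty)$ is nondecreasing with $\int_0^1\omega(t)\frac{dt}{t}<\infty$. Then there exists a constant $C$, depending only on $n$ and $\int_0^1\omega(t)\frac{dt}{t}$, such that for every cube $R\subset\mathbb{R}^n$, every $x,x',x''\in R$, and every integrable function $g$ vanishing on $R^*:=5\sqrt{n}\,R$, one has $\Big|\int_{\mathbb{R}^n}\big(K(x',y)-K(x'',y)\big)\,g(y)\,dy\Big|\le C\, Mg(x)$, where $M$ is the Hardy–Littlewood maximal operator. -/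
open MeasureTheory Set Filter
open scoped ENNReal Topology

noncomputable section

/-- Euclidean space `ℝⁿ`. -/
abbrev En (n : ℕ) := EuclideanSpace ℝ (Fin n)

/-- An axis-parallel cube in `ℝⁿ`, described by its center and (positive) half side length. -/
structure Cube (n : ℕ) where
  center : En n
  halfside : ℝ
  halfside_pos : 0 < halfside

namespace Cube

variable {n : ℕ}

/-- The set of points of a cube. -/
def toSet (Q : Cube n) : Set (En n) :=
  {x | ∀ i, |x i - Q.center i| ≤ Q.halfside}

/-- The dilated cube `Q* = 5√n Q`, with the same center and side length multiplied by `5√n`. -/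
def star [NeZero n] (Q : Cube n) : Cube n :=
  ⟨Q.center, 5 * Real.sqrt n * Q.halfside,
    mul_pos (mul_pos (by norm_num)
      (Real.sqrt_pos.mpr (by exact_mod_cast Nat.pos_of_ne_zero (NeZero.ne n))))
      Q.halfside_pos⟩

end Cube

/-- `R` is a dyadic subcube of `P`: it is obtained from `P` by `k` successive bisections
of the sides. -/
def IsDyadicSubcube {n : ℕ} (P R : Cube n) : Prop :=
  ∃ (k : ℕ) (j : Fin n → ℕ), (∀ i, j i < 2 ^ k) ∧
    R.halfside = P.halfside / 2 ^ k ∧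
    ∀ i, R.center i = P.center i - P.halfside + (2 * j i + 1) * (P.halfside / 2 ^ k)

/-- A family `S` of cubes is `η`-sparse if each `Q ∈ S` contains a measurable subset `E Q`
with `|E Q| ≥ η |Q|`, the sets `E Q` being pairwise disjoint. -/
def IsSparseFamily {n : ℕ} (η : ℝ) (S : Set (Cube n)) : Prop :=
  ∃ E : Cube n → Set (En n),
    (∀ Q ∈ S, E Q ⊆ Q.toSet ∧ MeasurableSet (E Q) ∧
      ENNReal.ofReal η * volume Q.toSet ≤ volume (E Q)) ∧
    S.Pairwise fun Q Q' => Disjoint (E Q) (E Q')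

/-- The average `⟨f⟩_Q = |Q|⁻¹ ∫_Q f`. -/
def cubeAvg {n : ℕ} (f : En n → ℝ) (Q : Cube n) : ℝ :=
  (volume Q.toSet).toReal⁻¹ * ∫ x in Q.toSet, f x

/-- The mean oscillation `Ω(f;Q) = |Q|⁻¹ ∫_Q |f - ⟨f⟩_Q|`. -/
def meanOsc {n : ℕ} (f : En n → ℝ) (Q : Cube n) : ℝ :=
  (volume Q.toSet).toReal⁻¹ * ∫ x in Q.toSet, |f x - cubeAvg f Q|

/-- `m` is a median value of `f` over the cube `Q`. -/
def IsMedian {n : ℕ} (f : En n → ℝ) (Q : Cube n) (m : ℝ) : Prop :=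
  volume {x ∈ Q.toSet | f x < m} ≤ volume Q.toSet / 2 ∧
  volume {x ∈ Q.toSet | m < f x} ≤ volume Q.toSet / 2

/-- The Hardy–Littlewood maximal operator (over all cubes containing `x`). -/
def maximal {n : ℕ} {E : Type*} [NormedAddCommGroup E] (g : En n → E) (x : En n) : ℝ≥0∞ :=
  ⨆ (Q : Cube n) (_ : x ∈ Q.toSet), (volume Q.toSet)⁻¹ * ∫⁻ y in Q.toSet, ‖g y‖₊

/-- The Riesz potential of order 1, `I₁ g (x) = ∫ g(y)/|x-y|^{n-1} dy`. -/
def riesz1 {n : ℕ} (g : En n → ℝ) (x : En n) : ℝ :=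
  ∫ y, g y / dist x y ^ (n - 1)

/-- A Calderón–Zygmund operator on `ℝⁿ`: a linear operator of weak type `(1,1)`,
represented off the support by integration against a kernel `K` satisfying a Dini
smoothness condition. -/
structure CZOperator (n : ℕ) where
  /-- The operator itself. -/
  toFun : (En n → ℝ) → (En n → ℝ)
  /-- The kernel. -/
  K : En n → En n → ℝ
  /-- The modulus of continuity. -/
  ω : ℝ → ℝ
  ω_nonneg : ∀ t ∈ Set.Icc (0:ℝ) 1, 0 ≤ ω t
  ω_mono : MonotoneOn ω (Set.Icc (0:ℝ) 1)
  ω_zero : ω 0 = 0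
  /-- The Dini condition `∫₀¹ ω(t) dt/t < ∞`. -/
  dini : IntegrableOn (fun t => ω t / t) (Set.Ioc (0:ℝ) 1)
  map_add : ∀ f g : En n → ℝ, Integrable f → Integrable g → toFun (f + g) = toFun f + toFun g
  map_smul : ∀ (c : ℝ) (f : En n → ℝ), Integrable f → toFun (c • f) = c • toFun f
  /-- `T` is of weak type `(1,1)`. -/
  weak11 : ∃ A : ℝ, ∀ f : En n → ℝ, Integrable f → ∀ lam : ℝ, 0 < lam →
    volume {x | lam < |toFun f x|} ≤ ENNReal.ofReal (A / lam * ∫ y, |f y|)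
  /-- Kernel representation away from the support. -/
  repr : ∀ f : En n → ℝ, Integrable f → HasCompactSupport f → ∀ x ∉ tsupport f,
    toFun f x = ∫ y, K x y * f y
  /-- The Dini smoothness condition on the kernel. -/
  kernel_smooth : ∀ x x' y : En n, x ≠ y → dist x x' ≤ dist x y / 2 →
    |K x y - K x' y| ≤ ω (dist x x' / dist x y) / dist x y ^ n

/-- An admissible pair `(φ, η)` for defining `⟨T(1), φ⟩`: `φ` is smooth, compactly
supported, with integral zero, and `η` is smooth, compactly supported and equal to `1`
on a neighborhood of the support of `φ`. -/
def Admissible {n : ℕ} (φ η : En n → ℝ) : Prop :=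
  ContDiff ℝ (⊤ : ℕ∞) φ ∧ HasCompactSupport φ ∧ (∫ x, φ x) = 0 ∧
  ContDiff ℝ (⊤ : ℕ∞) η ∧ HasCompactSupport η ∧
  ∃ U : Set (En n), IsOpen U ∧ tsupport φ ⊆ U ∧ Set.EqOn η 1 U

/-- The pairing `⟨T(1), φ⟩ := ⟨T(η), φ⟩ + ∫ (∫ K(x,y) φ(x) dx) (1 - η(y)) dy`. -/
def pairingT1 {n : ℕ} (T : CZOperator n) (φ η : En n → ℝ) : ℝ :=
  (∫ x, T.toFun η x * φ x) + ∫ y, (∫ x, T.K x y * φ x) * (1 - η y)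

/-- The condition `T(1) = 0`. -/
def T1EqZero {n : ℕ} (T : CZOperator n) : Prop :=
  ∀ φ η : En n → ℝ, Admissible φ η → pairingT1 T φ η = 0

/-- The condition `T(1) ∈ L^∞`: the distribution `T(1)` is represented by an essentially
bounded function `b`. -/
def T1MemLinf {n : ℕ} (T : CZOperator n) : Prop :=
  ∃ b : En n → ℝ, AEStronglyMeasurable b volume ∧ (∃ C : ℝ, ∀ᵐ x ∂volume, |b x| ≤ C) ∧
    ∀ φ η : En n → ℝ, Admissible φ η → pairingT1 T φ η = ∫ x, b x * φ x

end

section AuxLemmas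

open MeasureTheory Set

lemma abs_coord_le_dist {n : ℕ} (x y : En n) (i : Fin n) : |x i - y i| ≤ dist x y := by
  rw [EuclideanSpace.dist_eq, show |x i - y i| = Real.sqrt ((x i - y i) ^ 2) by
    rw [Real.sqrt_sq_eq_abs]]
  apply Real.sqrt_le_sqrt
  have : (x i - y i) ^ 2 = dist (x i) (y i) ^ 2 := by rw [Real.dist_eq, sq_abs]
  rw [this]
  exact Finset.single_le_sum (f := fun j => dist (x j) (y j) ^ 2)
    (fun j _ => sq_nonneg _) (Finset.mem_univ i)

lemma cube_volume {n : ℕ} (Q : Cube n) :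
    volume Q.toSet = ENNReal.ofReal ((2 * Q.halfside) ^ n) := by
  have hset : Q.toSet = (MeasurableEquiv.toLp 2 (Fin n → ℝ)).symm ⁻¹'
      (Set.univ.pi fun i => Icc (Q.center i - Q.halfside) (Q.center i + Q.halfside)) := by
    ext z
    have he : ∀ i, (MeasurableEquiv.toLp 2 (Fin n → ℝ)).symm z i = z i := fun i => rfl
    simp only [Cube.toSet, Set.mem_setOf_eq, Set.mem_preimage, Set.mem_pi, Set.mem_univ,
      true_implies, Set.mem_Icc, he]
    refine forall_congr' fun i => ?_
    rw [abs_le]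
    constructor
    · rintro ⟨h1, h2⟩; exact ⟨by linarith, by linarith⟩
    · rintro ⟨h1, h2⟩; exact ⟨by linarith, by linarith⟩
  rw [hset, (EuclideanSpace.volume_preserving_symm_measurableEquiv_toLp (Fin n)).measure_preimage
    (MeasurableSet.univ_pi fun i => measurableSet_Icc).nullMeasurableSet]
  rw [volume_pi_pi]
  have : ∀ i : Fin n, volume (Icc (Q.center i - Q.halfside) (Q.center i + Q.halfside))
      = ENNReal.ofReal (2 * Q.halfside) := by
    intro i; rw [Real.volume_Icc]; ring_nf
  simp only [this, Finset.prod_const, Finset.card_univ, Fintype.card_fin]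
  rw [ENNReal.ofReal_pow (by linarith [Q.halfside_pos])]

lemma omega_sum_le (ω : ℝ → ℝ) (hmono : MonotoneOn ω (Icc (0:ℝ) 1))
    (hpos : ∀ t ∈ Icc (0:ℝ) 1, 0 ≤ ω t) :
    (∑' k : ℕ, ENNReal.ofReal (ω ((1/2:ℝ) ^ (k+1)))) ≤
      2 * ∫⁻ t in Ioc (0:ℝ) 1, ENNReal.ofReal (ω t / t) := by
  set J : ℕ → Set ℝ := fun k => Ioc ((1/2:ℝ)^(k+1)) ((1/2:ℝ)^k) with hJ
  have hpow_pos : ∀ k : ℕ, (0:ℝ) < (1/2:ℝ)^k := fun k => pow_pos (by norm_num) k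
  have hpow_le1 : ∀ k : ℕ, (1/2:ℝ)^k ≤ 1 := fun k => pow_le_one₀ (by norm_num) (by norm_num)
  have hterm : ∀ k : ℕ, ENNReal.ofReal (ω ((1/2:ℝ)^(k+1))) ≤
      2 * ∫⁻ t in J k, ENNReal.ofReal (ω t / t) := by
    intro k
    have hmem : ((1/2:ℝ)^(k+1)) ∈ Icc (0:ℝ) 1 := ⟨(hpow_pos (k+1)).le, hpow_le1 (k+1)⟩
    have hωp : 0 ≤ ω ((1/2:ℝ)^(k+1)) := hpos _ hmem
    have hlow : ∀ t ∈ J k, ENNReal.ofReal (ω ((1/2:ℝ)^(k+1)) * 2^k) ≤ ENNReal.ofReal (ω t / t) := by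
      intro t ht
      apply ENNReal.ofReal_le_ofReal
      have ht0 : 0 < t := lt_trans (hpow_pos (k+1)) ht.1
      have htmem : t ∈ Icc (0:ℝ) 1 := ⟨ht0.le, le_trans ht.2 (hpow_le1 k)⟩
      have hω : ω ((1/2:ℝ)^(k+1)) ≤ ω t := hmono hmem htmem ht.1.le
      have hinv : (2:ℝ)^k ≤ t⁻¹ := by
        rw [le_inv_comm₀ (by positivity) ht0]
        calc t ≤ (1/2:ℝ)^k := ht.2
        _ = ((2:ℝ)^k)⁻¹ := by rw [one_div, inv_pow]
      calc ω ((1/2:ℝ)^(k+1)) * 2^k ≤ ω t * t⁻¹ :=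
            mul_le_mul hω hinv (by positivity) (le_trans hωp hω)
      _ = ω t / t := by rw [div_eq_mul_inv]
    have hvol : volume (J k) = ENNReal.ofReal ((1/2:ℝ)^(k+1)) := by
      rw [hJ]; simp only [Real.volume_Ioc]
      congr 1; ring
    have h2k : (1/2:ℝ)^k * 2^k = 1 := by
      rw [one_div, inv_pow, inv_mul_cancel₀ (by positivity)]
    calc ENNReal.ofReal (ω ((1/2:ℝ)^(k+1)))
        = 2 * (ENNReal.ofReal (ω ((1/2:ℝ)^(k+1)) * 2^k) * ENNReal.ofReal ((1/2:ℝ)^(k+1))) := by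
          rw [← ENNReal.ofReal_mul (mul_nonneg hωp (by positivity))]
          rw [show (2:ℝ≥0∞) = ENNReal.ofReal 2 by simp]
          rw [← ENNReal.ofReal_mul (by norm_num)]
          congr 1
          linear_combination -ω ((1/2:ℝ)^(k+1)) * h2k
    _ = 2 * (ENNReal.ofReal (ω ((1/2:ℝ)^(k+1)) * 2^k) * volume (J k)) := by rw [hvol]
    _ = 2 * ∫⁻ _ in J k, ENNReal.ofReal (ω ((1/2:ℝ)^(k+1)) * 2^k) := by
          rw [setLIntegral_const]
    _ ≤ 2 * ∫⁻ t in J k, ENNReal.ofReal (ω t / t) :=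
          mul_le_mul_right
            (lintegral_mono_ae ((ae_restrict_iff' measurableSet_Ioc).2 (ae_of_all _ hlow))) 2
  have hdisj : Pairwise (Function.onFun Disjoint J) := by
    have key : ∀ i j : ℕ, i < j → Disjoint (J i) (J j) := by
      intro i j hij
      rw [Set.disjoint_left]
      intro t hti htj
      have h1 : t ≤ (1/2:ℝ)^j := htj.2
      have h2 : ((1/2:ℝ)^(i+1)) < t := hti.1
      have : (1/2:ℝ)^j ≤ (1/2:ℝ)^(i+1) :=
        pow_le_pow_of_le_one (by norm_num) (by norm_num) hij
      linarith
    intro i j hij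
    rcases lt_or_gt_of_ne hij with h | h
    · exact key i j h
    · exact (key j i h).symm
  have hmeas : ∀ k, MeasurableSet (J k) := fun k => measurableSet_Ioc
  have hsub : (⋃ k, J k) ⊆ Ioc (0:ℝ) 1 := by
    rintro t ⟨s, ⟨k, rfl⟩, ht⟩
    exact ⟨lt_trans (hpow_pos (k+1)) ht.1, le_trans ht.2 (hpow_le1 k)⟩
  calc (∑' k : ℕ, ENNReal.ofReal (ω ((1/2:ℝ) ^ (k+1))))
      ≤ ∑' k : ℕ, 2 * ∫⁻ t in J k, ENNReal.ofReal (ω t / t) :=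
        ENNReal.tsum_le_tsum hterm
  _ = 2 * ∑' k : ℕ, ∫⁻ t in J k, ENNReal.ofReal (ω t / t) := ENNReal.tsum_mul_left
  _ = 2 * ∫⁻ t in ⋃ k, J k, ENNReal.ofReal (ω t / t) := by
        rw [lintegral_iUnion hmeas hdisj]
  _ ≤ 2 * ∫⁻ t in Ioc (0:ℝ) 1, ENNReal.ofReal (ω t / t) :=
        mul_le_mul_right (lintegral_mono_set hsub) 2

end AuxLemmas

/-- For a kernel `K : ℝⁿ × ℝⁿ → ℂ` satisfying the Dini smoothness
condition with modulus `ω`, for every cube `R`, all `x, x', x'' ∈ R` and every integrable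
`g` vanishing on `R* = 5√n R`, `|∫ (K(x',y) - K(x'',y)) g(y) dy| ≤ C M g(x)`, with `C`
depending only on `n` and `∫₀¹ ω(t) dt/t`. -/
theorem kernel_oscillation_le_maximal (n : ℕ) [NeZero n] (D : ℝ) :
    ∃ C : ℝ, ∀ (ω : ℝ → ℝ) (K : En n → En n → ℂ),
      MonotoneOn ω (Set.Icc (0:ℝ) 1) → (∀ t ∈ Set.Icc (0:ℝ) 1, 0 ≤ ω t) →
      IntegrableOn (fun t => ω t / t) (Set.Ioc (0:ℝ) 1) →
      (∫ t in Set.Ioc (0:ℝ) 1, ω t / t) ≤ D →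
      (∀ x x' y : En n, x ≠ y → dist x x' ≤ dist x y / 2 →
        ‖K x y - K x' y‖ ≤ ω (dist x x' / dist x y) / dist x y ^ n) →
      ∀ R : Cube n, ∀ x ∈ R.toSet, ∀ x' ∈ R.toSet, ∀ x'' ∈ R.toSet,
        ∀ g : En n → ℂ, Integrable g → (∀ y ∈ R.star.toSet, g y = 0) →
          ENNReal.ofReal ‖∫ y, (K x' y - K x'' y) * g y‖ ≤
            ENNReal.ofReal C * maximal g x := by
  classical
  refine ⟨8 ^ n * (4 * D), ?_⟩
  intro ω K hmono hωpos hint hD hK R x hx x' hx' x'' hx'' g hg hg0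
  have hℓ0 : 0 < R.halfside := R.halfside_pos
  set ℓ := R.halfside with hℓdef
  set c := R.center with hcdef
  have hsq1 : (1:ℝ) ≤ Real.sqrt n := by
    rw [show (1:ℝ) = Real.sqrt 1 by simp]
    exact Real.sqrt_le_sqrt (by exact_mod_cast Nat.one_le_iff_ne_zero.2 (NeZero.ne n))
  set sq := Real.sqrt n with hsqdef
  have hsq0 : 0 < sq := lt_of_lt_of_le one_pos hsq1
  set r0 : ℝ := 4 * sq * ℓ with hr0def
  have hr00 : 0 < r0 := by positivity
  -- diameter bound
  have hdiam : ∀ z ∈ R.toSet, ∀ w ∈ R.toSet, dist z w ≤ 2 * sq * ℓ := by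
    intro z hz w hw
    rw [EuclideanSpace.dist_eq]
    have hb : ∀ i : Fin n, dist (z i) (w i) ^ 2 ≤ (2 * ℓ) ^ 2 := by
      intro i
      have h1 : |z i - c i| ≤ ℓ := hz i
      have h2 : |w i - c i| ≤ ℓ := hw i
      have hzw : dist (z i) (w i) ≤ 2 * ℓ := by
        rw [Real.dist_eq]
        calc |z i - w i| ≤ |z i - c i| + |c i - w i| := abs_sub_le _ _ _
        _ ≤ ℓ + ℓ := add_le_add h1 (by rw [abs_sub_comm]; exact h2)
        _ = 2 * ℓ := by ring
      exact pow_le_pow_left₀ dist_nonneg hzw 2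
    calc Real.sqrt (∑ i, dist (z i) (w i) ^ 2)
        ≤ Real.sqrt (∑ _i : Fin n, (2 * ℓ) ^ 2) :=
          Real.sqrt_le_sqrt (Finset.sum_le_sum fun i _ => hb i)
    _ = Real.sqrt ((n : ℝ) * (2 * ℓ) ^ 2) := by
          rw [Finset.sum_const, Finset.card_univ, Fintype.card_fin, nsmul_eq_mul]
    _ = sq * (2 * ℓ) := by
          rw [Real.sqrt_mul (Nat.cast_nonneg n), Real.sqrt_sq (by linarith)]
    _ = 2 * sq * ℓ := by ring
  -- far bound
  have hfar : ∀ y : En n, g y ≠ 0 → ∀ z ∈ R.toSet, r0 ≤ dist z y := by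
    intro y hy z hz
    have hyO : y ∉ R.star.toSet := fun hmem => hy (hg0 y hmem)
    have hyO' : ¬ ∀ i, |y i - c i| ≤ 5 * sq * ℓ := hyO
    push_neg at hyO'
    obtain ⟨i, hi⟩ := hyO'
    have h1 : |z i - c i| ≤ ℓ := hz i
    have h2 : |z i - y i| ≤ dist z y := abs_coord_le_dist z y i
    have h3 : |y i - c i| ≤ |y i - z i| + |z i - c i| := abs_sub_le _ _ _
    rw [abs_sub_comm (y i) (z i)] at h3
    have hℓsq : ℓ ≤ sq * ℓ := le_mul_of_one_le_left hℓ0.le hsq1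
    rw [hr0def]; linarith
  -- annuli
  set r : ℕ → ℝ := fun k => 2 ^ k * r0 with hrdef
  have hrpos : ∀ k, 0 < r k := fun k => by simp only [hrdef]; positivity
  have hrsucc : ∀ k, r (k + 1) = 2 * r k := by
    intro k; simp only [hrdef]; ring
  set A : ℕ → Set (En n) := fun k => {y | r k ≤ dist x y ∧ dist x y < r (k + 1)} with hAdef
  have hdistmeas : Measurable fun y : En n => dist x y :=
    (continuous_const.dist continuous_id).measurable
  have hAmeas : ∀ k, MeasurableSet (A k) := by
    intro k
    have : A k = (fun y : En n => dist x y) ⁻¹' (Ico (r k) (r (k + 1))) := rfl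
    rw [this]
    exact hdistmeas measurableSet_Ico
  have hAdisj : Pairwise (Function.onFun Disjoint A) := by
    have key : ∀ i j : ℕ, i < j → Disjoint (A i) (A j) := by
      intro i j hij
      rw [Set.disjoint_left]
      intro y hyi hyj
      have h1 : dist x y < r (i + 1) := hyi.2
      have h2 : r j ≤ dist x y := hyj.1
      have h3 : r (i + 1) ≤ r j := by
        simp only [hrdef]
        have : (2:ℝ) ^ (i + 1) ≤ 2 ^ j := pow_le_pow_right₀ one_le_two hij
        nlinarith
      linarith
    intro i j hij
    rcases lt_or_gt_of_ne hij with hlt | hlt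
    exacts [key i j hlt, (key j i hlt).symm]
  have hcover : ∀ y : En n, g y ≠ 0 → y ∈ ⋃ k, A k := by
    intro y hy
    have hd : r0 ≤ dist x y := hfar y hy x hx
    have hex : ∃ k : ℕ, dist x y < r (k + 1) := by
      obtain ⟨k, hk⟩ := pow_unbounded_of_one_lt (R := ℝ) (dist x y / r0) one_lt_two
      refine ⟨k, ?_⟩
      simp only [hrdef]
      rw [div_lt_iff₀ hr00] at hk
      have h2 : (2:ℝ) ^ k ≤ 2 ^ (k + 1) := pow_le_pow_right₀ one_le_two (Nat.le_succ k)
      nlinarith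
    refine Set.mem_iUnion.2 ⟨Nat.find hex, ⟨?_, Nat.find_spec hex⟩⟩
    rcases Nat.eq_zero_or_pos (Nat.find hex) with h0 | h0
    · rw [h0]
      simpa only [hrdef, pow_zero, one_mul] using hd
    · obtain ⟨m, hm⟩ := Nat.exists_eq_succ_of_ne_zero (Nat.pos_iff_ne_zero.1 h0)
      rw [hm]
      have := Nat.find_min hex (m := m) (by omega)
      exact not_lt.1 this
  -- cubes
  set Qc : ℕ → Cube n := fun k => ⟨x, r (k + 1), hrpos (k + 1)⟩ with hQdef
  have hxQ : ∀ k, x ∈ (Qc k).toSet := by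
    intro k i
    show |x i - x i| ≤ r (k + 1)
    simpa using (hrpos (k + 1)).le
  have hAQ : ∀ k, A k ⊆ (Qc k).toSet := by
    intro k y hy i
    show |y i - x i| ≤ r (k + 1)
    exact le_trans (abs_coord_le_dist y x i) (by rw [dist_comm]; exact hy.2.le)
  have hMk : ∀ k, (∫⁻ y in (Qc k).toSet, ‖g y‖₊) ≤
      ENNReal.ofReal ((2 * r (k + 1)) ^ n) * maximal g x := by
    intro k
    have hvol : volume (Qc k).toSet = ENNReal.ofReal ((2 * r (k + 1)) ^ n) := by
      have := cube_volume (Qc k)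
      simpa only [hQdef] using this
    have hv0 : volume (Qc k).toSet ≠ 0 := by
      rw [hvol, Ne, ENNReal.ofReal_eq_zero, not_le]
      have := hrpos (k + 1)
      positivity
    have hvt : volume (Qc k).toSet ≠ ⊤ := by rw [hvol]; exact ENNReal.ofReal_ne_top
    have hle : (volume (Qc k).toSet)⁻¹ * ∫⁻ y in (Qc k).toSet, ‖g y‖₊ ≤ maximal g x :=
      le_iSup₂ (f := fun (Q : Cube n) (_ : x ∈ Q.toSet) =>
        (volume Q.toSet)⁻¹ * ∫⁻ y in Q.toSet, (‖g y‖₊ : ℝ≥0∞)) (Qc k) (hxQ k)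
    calc (∫⁻ y in (Qc k).toSet, (‖g y‖₊ : ℝ≥0∞))
        = volume (Qc k).toSet *
            ((volume (Qc k).toSet)⁻¹ * ∫⁻ y in (Qc k).toSet, ‖g y‖₊) := by
          rw [← mul_assoc, ENNReal.mul_inv_cancel hv0 hvt, one_mul]
    _ ≤ volume (Qc k).toSet * maximal g x := mul_le_mul_right hle _
    _ = ENNReal.ofReal ((2 * r (k + 1)) ^ n) * maximal g x := by rw [hvol]
  -- kernel bound on annuli
  set q : ℕ → ℝ := fun k => (1/2 : ℝ) ^ max 1 k with hqdef
  have hq01 : ∀ k, q k ∈ Icc (0:ℝ) 1 :=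
    fun k => ⟨(pow_pos (by norm_num) _).le, pow_le_one₀ (by norm_num) (by norm_num)⟩
  set B : ℕ → ℝ := fun k => ω (q k) * (2 ^ n / r k ^ n) with hBdef
  have hB0 : ∀ k, 0 ≤ B k := by
    intro k
    have h1 := hωpos _ (hq01 k)
    have h2 := hrpos k
    simp only [hBdef]
    positivity
  have hker : ∀ k, ∀ y ∈ A k, (‖(K x' y - K x'' y) * g y‖₊ : ℝ≥0∞) ≤
      ENNReal.ofReal (B k) * ‖g y‖₊ := by
    intro k y hy
    by_cases hgy : g y = 0
    · simp [hgy]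
    · have hdx : r0 ≤ dist x y := hfar y hgy x hx
      have hdx' : r0 ≤ dist x' y := hfar y hgy x' hx'
      have hδ : dist x' x'' ≤ 2 * sq * ℓ := hdiam x' hx' x'' hx''
      have hd'0 : 0 < dist x' y := lt_of_lt_of_le hr00 hdx'
      have hxy' : x' ≠ y := by
        intro e; rw [e, dist_self] at hd'0; exact lt_irrefl _ hd'0
      have hhalf : dist x' x'' ≤ dist x' y / 2 := by
        rw [hr0def] at hdx'; linarith
      have hKb := hK x' x'' y hxy' hhalf
      have hxx' : dist x x' ≤ 2 * sq * ℓ := hdiam x hx x' hx'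
      have hd2 : dist x y / 2 ≤ dist x' y := by
        have htri : dist x y ≤ dist x x' + dist x' y := dist_triangle x x' y
        rw [hr0def] at hdx
        linarith
      have hdk : r k ≤ dist x y := hy.1
      have hrk0 : 0 < r k := hrpos k
      have hratio : dist x' x'' / dist x' y ≤ q k := by
        have hhalf' : dist x' x'' / dist x' y ≤ 1/2 := by
          rw [div_le_iff₀ hd'0]; linarith
        have hk' : dist x' x'' / dist x' y ≤ (1/2:ℝ) ^ k := by
          rw [div_le_iff₀ hd'0]
          have h2k : (0:ℝ) < (2:ℝ) ^ k := by positivity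
          have hpk : (1/2:ℝ) ^ k = ((2:ℝ) ^ k)⁻¹ := by rw [one_div, inv_pow]
          rw [hpk]
          have i0 : (0:ℝ) < ((2:ℝ) ^ k)⁻¹ := inv_pos.2 h2k
          have hdk' : 2 ^ k * r0 ≤ dist x y := by
            simpa only [hrdef] using hdk
          have c1 : r0 ≤ ((2:ℝ) ^ k)⁻¹ * dist x y := by
            have := mul_le_mul_of_nonneg_left hdk' i0.le
            calc r0 = ((2:ℝ) ^ k)⁻¹ * (2 ^ k * r0) := by field_simp
            _ ≤ ((2:ℝ) ^ k)⁻¹ * dist x y := this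
          have c2 := mul_le_mul_of_nonneg_left hd2 i0.le
          have hδ' : dist x' x'' ≤ r0 / 2 := by rw [hr0def]; linarith
          nlinarith [c1, c2, hδ']
        simp only [hqdef]
        rcases max_choice 1 k with hmax | hmax
        · rw [hmax, pow_one]; exact hhalf'
        · rw [hmax]; exact hk'
      have hratmem : dist x' x'' / dist x' y ∈ Icc (0:ℝ) 1 := by
        constructor
        · positivity
        · have h1 := hratio
          have h2 := (hq01 k).2
          linarith
      have hωle : ω (dist x' x'' / dist x' y) ≤ ω (q k) := hmono hratmem (hq01 k) hratio
      have hpow : 1 / dist x' y ^ n ≤ 2 ^ n / r k ^ n := by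
        rw [div_le_div_iff₀ (by positivity) (by positivity)]
        calc 1 * r k ^ n = r k ^ n := one_mul _
        _ ≤ (2 * dist x' y) ^ n := by
              apply pow_le_pow_left₀ hrk0.le
              linarith
        _ = 2 ^ n * dist x' y ^ n := mul_pow 2 _ n
      have hKB : ‖K x' y - K x'' y‖ ≤ B k := by
        simp only [hBdef]
        calc ‖K x' y - K x'' y‖ ≤ ω (dist x' x'' / dist x' y) / dist x' y ^ n := hKb
        _ = ω (dist x' x'' / dist x' y) * (1 / dist x' y ^ n) := by ring
        _ ≤ ω (q k) * (2 ^ n / r k ^ n) :=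
            mul_le_mul hωle hpow (by positivity) (hωpos _ (hq01 k))
      calc (‖(K x' y - K x'' y) * g y‖₊ : ℝ≥0∞)
          = (‖K x' y - K x'' y‖₊ : ℝ≥0∞) * ‖g y‖₊ := by
            rw [nnnorm_mul, ENNReal.coe_mul]
      _ ≤ ENNReal.ofReal (B k) * ‖g y‖₊ := by
            apply mul_le_mul_left
            rw [← enorm_eq_nnnorm, ← ofReal_norm]
            exact ENNReal.ofReal_le_ofReal hKB
  -- per annulus
  have hAk_bound : ∀ k, (∫⁻ y in A k, (‖(K x' y - K x'' y) * g y‖₊ : ℝ≥0∞)) ≤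
      ENNReal.ofReal (B k) * (ENNReal.ofReal ((2 * r (k + 1)) ^ n) * maximal g x) := by
    intro k
    calc (∫⁻ y in A k, (‖(K x' y - K x'' y) * g y‖₊ : ℝ≥0∞))
        ≤ ∫⁻ y in A k, ENNReal.ofReal (B k) * ‖g y‖₊ :=
          lintegral_mono_ae ((ae_restrict_iff' (hAmeas k)).2 (ae_of_all _ (hker k)))
    _ = ENNReal.ofReal (B k) * ∫⁻ y in A k, ‖g y‖₊ :=
          lintegral_const_mul' _ _ ENNReal.ofReal_ne_top
    _ ≤ ENNReal.ofReal (B k) * ∫⁻ y in (Qc k).toSet, ‖g y‖₊ :=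
          mul_le_mul_right (lintegral_mono_set (hAQ k)) _
    _ ≤ _ := mul_le_mul_right (hMk k) _
  -- main decomposition
  have hmain : ENNReal.ofReal ‖∫ y, (K x' y - K x'' y) * g y‖ ≤
      (∑' k : ℕ, ENNReal.ofReal (B k) * ENNReal.ofReal ((2 * r (k + 1)) ^ n)) *
        maximal g x := by
    calc ENNReal.ofReal ‖∫ y, (K x' y - K x'' y) * g y‖
        = (‖∫ y, (K x' y - K x'' y) * g y‖₊ : ℝ≥0∞) := ofReal_norm _
    _ ≤ ∫⁻ y, ‖(K x' y - K x'' y) * g y‖₊ := enorm_integral_le_lintegral_enorm _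
    _ ≤ ∫⁻ y, (⋃ k, A k).indicator
          (fun y => (‖(K x' y - K x'' y) * g y‖₊ : ℝ≥0∞)) y := by
          apply lintegral_mono
          intro y
          by_cases hy : y ∈ ⋃ k, A k
          · rw [Set.indicator_of_mem hy]
          · rw [Set.indicator_of_notMem hy]
            have hgy : g y = 0 := by
              by_contra hgy
              exact hy (hcover y hgy)
            simp [hgy]
    _ = ∫⁻ y in ⋃ k, A k, ‖(K x' y - K x'' y) * g y‖₊ :=
          lintegral_indicator (MeasurableSet.iUnion hAmeas) _
    _ = ∑' k, ∫⁻ y in A k, (‖(K x' y - K x'' y) * g y‖₊ : ℝ≥0∞) :=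
          lintegral_iUnion hAmeas hAdisj _
    _ ≤ ∑' k, ENNReal.ofReal (B k) *
          (ENNReal.ofReal ((2 * r (k + 1)) ^ n) * maximal g x) :=
          ENNReal.tsum_le_tsum hAk_bound
    _ = ∑' k, ENNReal.ofReal (B k) * ENNReal.ofReal ((2 * r (k + 1)) ^ n) * maximal g x := by
          simp only [mul_assoc]
    _ = _ := ENNReal.tsum_mul_right
  -- the coefficient identity
  have hBV : ∀ k : ℕ, ENNReal.ofReal (B k) * ENNReal.ofReal ((2 * r (k + 1)) ^ n)
      = ENNReal.ofReal ((8:ℝ) ^ n) * ENNReal.ofReal (ω (q k)) := by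
    intro k
    rw [← ENNReal.ofReal_mul (hB0 k), ← ENNReal.ofReal_mul (by positivity)]
    congr 1
    have hrk := hrpos k
    have hstep : (2 * r (k + 1)) ^ n = 4 ^ n * r k ^ n := by
      rw [hrsucc k, show (2 * (2 * r k)) = 4 * r k by ring, mul_pow]
    have h248 : (2:ℝ) ^ n * 4 ^ n = 8 ^ n := by
      rw [← mul_pow]; norm_num
    simp only [hBdef]
    rw [hstep]
    calc ω (q k) * (2 ^ n / r k ^ n) * (4 ^ n * r k ^ n)
        = ω (q k) * (2 ^ n * 4 ^ n) * (r k ^ n / r k ^ n) := by ring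
    _ = ω (q k) * (2 ^ n * 4 ^ n) := by rw [div_self (pow_pos hrk n).ne', mul_one]
    _ = 8 ^ n * ω (q k) := by rw [h248]; ring
  -- sum of the omegas
  have hqsum : (∑' k : ℕ, ENNReal.ofReal (ω (q k))) ≤
      4 * ∫⁻ t in Ioc (0:ℝ) 1, ENNReal.ofReal (ω t / t) := by
    have hsplit : (∑' k : ℕ, ENNReal.ofReal (ω (q k)))
        = ENNReal.ofReal (ω (q 0)) + ∑' k : ℕ, ENNReal.ofReal (ω (q (k + 1))) :=
      tsum_eq_zero_add' ENNReal.summable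
    have hq0 : q 0 = (1/2:ℝ) ^ (0 + 1) := by simp only [hqdef]; norm_num
    have hqs : ∀ k : ℕ, q (k + 1) = (1/2:ℝ) ^ (k + 1) := by
      intro k
      simp only [hqdef]
      rw [max_eq_right (by omega : 1 ≤ k + 1)]
    have hS := omega_sum_le ω hmono hωpos
    have h1 : ENNReal.ofReal (ω (q 0)) ≤
        ∑' k : ℕ, ENNReal.ofReal (ω ((1/2:ℝ) ^ (k + 1))) := by
      rw [hq0]
      exact ENNReal.le_tsum 0
    have h2 : (∑' k : ℕ, ENNReal.ofReal (ω (q (k + 1))))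
        = ∑' k : ℕ, ENNReal.ofReal (ω ((1/2:ℝ) ^ (k + 1))) := by
      congr 1
    rw [hsplit, h2]
    calc ENNReal.ofReal (ω (q 0)) + ∑' k : ℕ, ENNReal.ofReal (ω ((1/2:ℝ) ^ (k + 1)))
        ≤ (∑' k : ℕ, ENNReal.ofReal (ω ((1/2:ℝ) ^ (k + 1))))
          + ∑' k : ℕ, ENNReal.ofReal (ω ((1/2:ℝ) ^ (k + 1))) := add_le_add_left h1 _
    _ ≤ (2 * ∫⁻ t in Ioc (0:ℝ) 1, ENNReal.ofReal (ω t / t))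
          + 2 * ∫⁻ t in Ioc (0:ℝ) 1, ENNReal.ofReal (ω t / t) := add_le_add hS hS
    _ = 4 * ∫⁻ t in Ioc (0:ℝ) 1, ENNReal.ofReal (ω t / t) := by ring
  -- Dini integral
  have hSD : (∫⁻ t in Ioc (0:ℝ) 1, ENNReal.ofReal (ω t / t)) ≤ ENNReal.ofReal D := by
    rw [← MeasureTheory.ofReal_integral_eq_lintegral_ofReal hint
      ((ae_restrict_iff' measurableSet_Ioc).2 (ae_of_all _ fun t ht =>
        div_nonneg (hωpos t ⟨ht.1.le, ht.2⟩) ht.1.le))]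
    exact ENNReal.ofReal_le_ofReal hD
  -- finish
  have hfinal : (∑' k : ℕ, ENNReal.ofReal (B k) * ENNReal.ofReal ((2 * r (k + 1)) ^ n))
      ≤ ENNReal.ofReal (8 ^ n * (4 * D)) := by
    calc (∑' k : ℕ, ENNReal.ofReal (B k) * ENNReal.ofReal ((2 * r (k + 1)) ^ n))
        = ∑' k : ℕ, ENNReal.ofReal ((8:ℝ) ^ n) * ENNReal.ofReal (ω (q k)) := by
          congr 1
          funext k
          exact hBV k
    _ = ENNReal.ofReal ((8:ℝ) ^ n) * ∑' k : ℕ, ENNReal.ofReal (ω (q k)) :=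
          ENNReal.tsum_mul_left
    _ ≤ ENNReal.ofReal ((8:ℝ) ^ n) *
          (4 * ∫⁻ t in Ioc (0:ℝ) 1, ENNReal.ofReal (ω t / t)) :=
          mul_le_mul_right hqsum _
    _ ≤ ENNReal.ofReal ((8:ℝ) ^ n) * (4 * ENNReal.ofReal D) :=
          mul_le_mul_right (mul_le_mul_right hSD _) _
    _ = ENNReal.ofReal (8 ^ n * (4 * D)) := by
          rw [ENNReal.ofReal_mul (by positivity : (0:ℝ) ≤ 8 ^ n)]
          congr 1
          rw [ENNReal.ofReal_mul (by norm_num : (0:ℝ) ≤ 4)]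
          norm_num
  exact le_trans hmain (mul_le_mul_left hfinal (maximal g x))
end

section
/- Let $f$ be an integrable function on $\mathbb{R}^n$ and let $P^*, R^*$ be cubes with $R^*\subset P^*$. Then for any median values $m_f(R^*)$, $m_f(P^*)$ of $f$ over $R^*$ and $P^*$ respectively, and for every $x\in R^*$, $|m_f(R^*)-m_f(P^*)|\le 2\, M\big((f-m_f(P^*))\chi_{P^*}\big)(x)$, where $M$ is the Hardy–Littlewood maximal operator. -/
open MeasureTheory Set Filter
open scoped ENNReal Topology

lemma cube_closed {n : ℕ} (Q : Cube n) : IsClosed Q.toSet := by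
  have : Q.toSet = ⋂ i, {x : En n | |x i - Q.center i| ≤ Q.halfside} := by
    ext x; simp [Cube.toSet]
  rw [this]
  refine isClosed_iInter fun i => ?_
  have hc : Continuous fun x : En n => |x i - Q.center i| :=
    (((continuous_apply i).comp (EuclideanSpace.equiv (Fin n) ℝ).continuous).sub continuous_const).abs
  exact isClosed_le hc continuous_const

lemma cube_vol_pos {n : ℕ} (Q : Cube n) : volume Q.toSet ≠ 0 := by
  have hsub : Metric.ball Q.center Q.halfside ⊆ Q.toSet := by
    intro x hx i
    have h1 : dist (x i) (Q.center i) ≤ dist x Q.center := by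
      rw [EuclideanSpace.dist_eq]
      have : dist (x i) (Q.center i) = Real.sqrt (dist (x i) (Q.center i) ^ 2) := by
        rw [Real.sqrt_sq dist_nonneg]
      rw [this]
      apply Real.sqrt_le_sqrt
      exact Finset.single_le_sum (f := fun j => dist (x j) (Q.center j) ^ 2)
        (fun j _ => sq_nonneg _) (Finset.mem_univ i)
    rw [Real.dist_eq] at h1
    exact h1.trans (Metric.mem_ball.mp hx).le
  have := Metric.measure_ball_pos volume Q.center Q.halfside_pos
  exact fun h => absurd (measure_mono_null hsub h) this.ne'

lemma cube_vol_ne_top {n : ℕ} (Q : Cube n) : volume Q.toSet ≠ ⊤ := by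
  have hsub : Q.toSet ⊆ Metric.closedBall Q.center (Real.sqrt n * Q.halfside) := by
    intro x hx
    rw [Metric.mem_closedBall, EuclideanSpace.dist_eq]
    have : ∀ i ∈ Finset.univ, dist (x i) (Q.center i) ^ 2 ≤ Q.halfside ^ 2 := by
      intro i _
      have := hx i
      rw [← Real.dist_eq] at this
      exact pow_le_pow_left₀ dist_nonneg this 2
    calc Real.sqrt (∑ i, dist (x i) (Q.center i) ^ 2)
        ≤ Real.sqrt (n * Q.halfside ^ 2) := by
          apply Real.sqrt_le_sqrt
          calc ∑ i, dist (x i) (Q.center i) ^ 2 ≤ ∑ _i : Fin n, Q.halfside ^ 2 :=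
                Finset.sum_le_sum this
            _ = n * Q.halfside ^ 2 := by simp [Finset.sum_const, mul_comm]
      _ = Real.sqrt n * Q.halfside := by
          rw [Real.sqrt_mul (Nat.cast_nonneg n), Real.sqrt_sq Q.halfside_pos.le]
  exact ((measure_mono hsub).trans_lt (measure_closedBall_lt_top)).ne

lemma half_le_aux {V A B : ℝ≥0∞} (hV : V ≠ ⊤) (hVAB : V ≤ A + B) (hA : A ≤ V / 2) :
    V / 2 ≤ B := by
  have h : V - V / 2 ≤ B := by
    rw [tsub_le_iff_right]
    calc V ≤ A + B := hVAB
      _ ≤ V / 2 + B := add_le_add_left hA B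
      _ = B + V / 2 := add_comm _ _
  rwa [ENNReal.sub_half hV] at h


theorem median_difference_le_maximal (n : ℕ) (f : En n → ℝ) (hf : Integrable f)
    (Rs Ps : Cube n) (hRP : Rs.toSet ⊆ Ps.toSet)
    (mR mP : ℝ) (hmR : IsMedian f Rs mR) (hmP : IsMedian f Ps mP) :
    ∀ x ∈ Rs.toSet,
      ENNReal.ofReal |mR - mP| ≤
        2 * maximal (Set.indicator Ps.toSet (fun z => f z - mP)) x := by
  intro x hx
  set g : En n → ℝ := Set.indicator Ps.toSet (fun z => f z - mP) with hg
  have hRmeas : MeasurableSet Rs.toSet := (cube_closed Rs).measurableSet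
  set V := volume Rs.toSet with hV
  have hV0 : V ≠ 0 := cube_vol_pos Rs
  have hVtop : V ≠ ⊤ := cube_vol_ne_top Rs
  set c := |mR - mP| with hc
  -- step 1: the set where |f - mP| ≥ c has measure ≥ V/2 inside Rs
  have hB : V / 2 ≤ volume ({y | ENNReal.ofReal c ≤ ENNReal.ofReal |f y - mP|} ∩ Rs.toSet) := by
    rcases le_total mP mR with hle | hle
    · -- use B = {y ∈ Rs | mR ≤ f y}
      have hsub : {y ∈ Rs.toSet | mR ≤ f y} ⊆
          {y | ENNReal.ofReal c ≤ ENNReal.ofReal |f y - mP|} ∩ Rs.toSet := by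
        rintro y ⟨hy, hfy⟩
        refine ⟨?_, hy⟩
        apply ENNReal.ofReal_le_ofReal
        rw [hc, abs_of_nonneg (sub_nonneg.mpr hle)]
        calc mR - mP ≤ f y - mP := by linarith
          _ ≤ |f y - mP| := le_abs_self _
      refine le_trans ?_ (measure_mono hsub)
      refine half_le_aux hVtop ?_ hmR.1
      refine measure_mono ?_ |>.trans (measure_union_le _ _)
      intro y hy
      rcases lt_or_ge (f y) mR with h | h
      · exact Or.inl ⟨hy, h⟩
      · exact Or.inr ⟨hy, h⟩
    · -- use B = {y ∈ Rs | f y ≤ mR}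
      have hsub : {y ∈ Rs.toSet | f y ≤ mR} ⊆
          {y | ENNReal.ofReal c ≤ ENNReal.ofReal |f y - mP|} ∩ Rs.toSet := by
        rintro y ⟨hy, hfy⟩
        refine ⟨?_, hy⟩
        apply ENNReal.ofReal_le_ofReal
        rw [hc, abs_sub_comm, abs_of_nonneg (sub_nonneg.mpr hle)]
        calc mP - mR ≤ mP - f y := by linarith
          _ ≤ |f y - mP| := by rw [abs_sub_comm]; exact le_abs_self _
      refine le_trans ?_ (measure_mono hsub)
      refine half_le_aux hVtop ?_ hmR.2
      refine measure_mono ?_ |>.trans (measure_union_le _ _)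
      intro y hy
      rcases lt_or_ge mR (f y) with h | h
      · exact Or.inl ⟨hy, h⟩
      · exact Or.inr ⟨hy, h⟩
  -- step 2: Markov
  have hmeas : AEMeasurable (fun y => ENNReal.ofReal |f y - mP|)
      (volume.restrict Rs.toSet) := by
    have : AEMeasurable f volume := hf.aemeasurable
    exact (ENNReal.measurable_ofReal.comp_aemeasurable
      ((this.sub aemeasurable_const).norm)).restrict
  have hI : ENNReal.ofReal c * (V / 2) ≤ ∫⁻ y in Rs.toSet, ENNReal.ofReal |f y - mP| := by
    have hmark := mul_meas_ge_le_lintegral₀ hmeas (ENNReal.ofReal c)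
    rw [Measure.restrict_apply' hRmeas] at hmark
    exact le_trans (mul_le_mul_right hB _) hmark
  -- rewrite integrand
  have hEq : ∫⁻ y in Rs.toSet, (‖g y‖₊ : ℝ≥0∞) = ∫⁻ y in Rs.toSet, ENNReal.ofReal |f y - mP| := by
    refine setLIntegral_congr_fun hRmeas (fun y hy => ?_)
    rw [hg, Set.indicator_of_mem (hRP hy), ← Real.norm_eq_abs, ofReal_norm, enorm_eq_nnnorm]
  rw [← hEq] at hI
  -- step 3: the maximal function at Rs
  have hM : V⁻¹ * ∫⁻ y in Rs.toSet, (‖g y‖₊ : ℝ≥0∞) ≤ maximal g x := by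
    unfold maximal
    exact le_iSup₂ (f := fun (Q : Cube n) (_ : x ∈ Q.toSet) =>
      (volume Q.toSet)⁻¹ * ∫⁻ y in Q.toSet, (‖g y‖₊ : ℝ≥0∞)) Rs hx
  have h1 : (V / 2) * (2 * V⁻¹) = 1 := by
    rw [← mul_assoc, ENNReal.div_mul_cancel two_ne_zero ENNReal.ofNat_ne_top,
      ENNReal.mul_inv_cancel hV0 hVtop]
  calc ENNReal.ofReal c = ENNReal.ofReal c * ((V / 2) * (2 * V⁻¹)) := by rw [h1, mul_one]
    _ = (ENNReal.ofReal c * (V / 2)) * (2 * V⁻¹) := by ring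
    _ ≤ (∫⁻ y in Rs.toSet, (‖g y‖₊ : ℝ≥0∞)) * (2 * V⁻¹) := mul_le_mul_left hI _
    _ = 2 * (V⁻¹ * ∫⁻ y in Rs.toSet, (‖g y‖₊ : ℝ≥0∞)) := by ring
    _ ≤ 2 * maximal g x := mul_le_mul_right hM 2
end
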